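/- Discrete needle-like variation derivative: let f : ℝⁿ × ℝ^m × ℕ → ℝⁿ be C¹ in (q,u), fix a control u, an initial state q₀, a time r ∈ {0,...,b−1}, and a direction y ∈ ℝ^m. For α ∈ [0,1] define the perturbed control u_α by u_α(r) = u(r) + α(y − u(r)) and u_α(t) = u(t) for t ≠ r, and let q_α be the trajectory q_α(t+1) = q_α(t) + f(q_α(t),u_α(t),t), q_α(0) = q₀. Then for each t ∈ {r+1,...,b}, the map α ↦ q_α(t) is differentiable at α = 0 and its derivative is w(t), where w satisfies w(r+1) = (∂f/∂u)(q₀*(r),u(r),r)·(y − u(r)) (with q₀* = q_0 the unperturbed trajectory) and w(t+1) = w(t) + (∂f/∂q)(q₀*(t),u(t),t)·w(t) for t ≥ r+1. -/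

import Mathlib

/-!
Outside the time `r` the perturbed controls agree with `u`, so before `r` the trajectories do
not depend on `α`, at time `r + 1` only the control argument of the step map moves (linearly
in `α`), and afterwards only the state argument does. One chain rule for the step
`q ↦ q + f q c` through a jointly differentiable `f`, split into its two partial derivatives,
therefore gives both the initial value of `w` and its linearized recursion.
-/

/-- Discrete trajectory: q(t+1) = q(t) + f(q(t), u(t), t), q(0) = q₀. -/
def traj18 {n m : ℕ}
    (f : EuclideanSpace ℝ (Fin n) → EuclideanSpace ℝ (Fin m) → ℕ → EuclideanSpace ℝ (Fin n))
    (u : ℕ → EuclideanSpace ℝ (Fin m)) (q₀ : EuclideanSpace ℝ (Fin n)) :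
    ℕ → EuclideanSpace ℝ (Fin n)
  | 0 => q₀
  | t + 1 => traj18 f u q₀ t + f (traj18 f u q₀ t) (u t) t

section Step

variable {E U : Type*} [NormedAddCommGroup E] [NormedSpace ℝ E]
  [NormedAddCommGroup U] [NormedSpace ℝ U]

theorem fderiv_uncurry_apply_eq_add {F : E → U → E} {q : E} {c : U}
    (hF : DifferentiableAt ℝ (fun z : E × U => F z.1 z.2) (q, c)) (v : E) (w : U) :
    fderiv ℝ (fun z : E × U => F z.1 z.2) (q, c) (v, w) =
      fderiv ℝ (fun x => F x c) q v + fderiv ℝ (fun x => F q x) c w := by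
  set L := fderiv ℝ (fun z : E × U => F z.1 z.2) (q, c)
  have hfst : fderiv ℝ (fun x => F x c) q = L.comp (ContinuousLinearMap.inl ℝ E U) :=
    (hF.hasFDerivAt.comp (f := fun x => (x, c)) q (hasFDerivAt_prodMk_left q c)).fderiv
  have hsnd : fderiv ℝ (fun x => F q x) c = L.comp (ContinuousLinearMap.inr ℝ E U) :=
    (hF.hasFDerivAt.comp (f := fun x => (q, x)) c (hasFDerivAt_prodMk_right q c)).fderiv
  rw [hfst, hsnd]
  exact (L.comp_inl_add_comp_inr (v, w)).symm

theorem HasDerivAt.add_step {F : E → U → E} {p : ℝ → E} {c : ℝ → U} {p' : E} {c' : U}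
    {a : ℝ} (hF : DifferentiableAt ℝ (fun z : E × U => F z.1 z.2) (p a, c a))
    (hp : HasDerivAt p p' a) (hc : HasDerivAt c c' a) :
    HasDerivAt (fun α => p α + F (p α) (c α))
      (p' + fderiv ℝ (fun x => F x (c a)) (p a) p' + fderiv ℝ (fun x => F (p a) x) (c a) c')
      a := by
  have hF_comp := hF.hasFDerivAt.comp_hasDerivAt a (hp.prodMk hc)
  rw [fderiv_uncurry_apply_eq_add hF] at hF_comp
  rw [add_assoc]
  exact hp.add hF_comp

end Step

theorem traj18_congr {n m : ℕ}
    {f : EuclideanSpace ℝ (Fin n) → EuclideanSpace ℝ (Fin m) → ℕ → EuclideanSpace ℝ (Fin n)}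
    {u v : ℕ → EuclideanSpace ℝ (Fin m)} {q₀ : EuclideanSpace ℝ (Fin n)} {t : ℕ}
    (h : ∀ k < t, u k = v k) : traj18 f u q₀ t = traj18 f v q₀ t := by
  induction t with
  | zero => rfl
  | succ t ih =>
    simp only [traj18, ih fun k hk => h k (Nat.lt_succ_of_lt hk), h t (Nat.lt_succ_self t)]

theorem stmt18_general {n m b : ℕ}
    (f : EuclideanSpace ℝ (Fin n) → EuclideanSpace ℝ (Fin m) → ℕ → EuclideanSpace ℝ (Fin n))
    (hf : ∀ t, ContDiff ℝ 1 fun p : EuclideanSpace ℝ (Fin n) × EuclideanSpace ℝ (Fin m) =>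
      f p.1 p.2 t)
    (u : ℕ → EuclideanSpace ℝ (Fin m)) (q₀ : EuclideanSpace ℝ (Fin n))
    (r : ℕ) (y : EuclideanSpace ℝ (Fin m))
    -- the perturbed control u_α
    (uvar : ℝ → ℕ → EuclideanSpace ℝ (Fin m))
    (huvar : ∀ α t, uvar α t = if t = r then u r + α • (y - u r) else u t)
    -- the variation vector w
    (w : ℕ → EuclideanSpace ℝ (Fin n))
    (hw1 : w (r + 1) = fderiv ℝ (fun v => f (traj18 f u q₀ r) v r) (u r) (y - u r))
    (hw2 : ∀ t, r + 1 ≤ t →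
      w (t + 1) = w t + fderiv ℝ (fun x => f x (u t) t) (traj18 f u q₀ t) (w t)) :
    ∀ t, r + 1 ≤ t → t ≤ b →
      HasDerivAt (fun α : ℝ => traj18 f (uvar α) q₀ t) (w t) 0 := by
  have hdiff t := (hf t).differentiable one_ne_zero
  have huvar_zero : uvar 0 = u := funext fun t => by
    rw [huvar]; split_ifs with h <;> simp [h]
  have hbefore : ∀ α, traj18 f (uvar α) q₀ r = traj18 f u q₀ r :=
    fun α => traj18_congr fun k hk => by simp [huvar, hk.ne]
  suffices ∀ t, r + 1 ≤ t → HasDerivAt (fun α : ℝ => traj18 f (uvar α) q₀ t) (w t) 0 from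
    fun t ht _ => this t ht
  intro t ht
  induction t, ht using Nat.le_induction with
  | base =>
    simp only [traj18, hbefore, huvar, if_pos]
    refine ((hasDerivAt_const (0 : ℝ) (traj18 f u q₀ r)).add_step (F := fun x c => f x c r)
      (hdiff r _) (((hasDerivAt_id (0 : ℝ)).smul_const (y - u r)).const_add (u r))).congr_deriv ?_
    simp [hw1]
  | succ t hrt ih =>
    simp only [traj18, huvar, if_neg (Nat.ne_of_gt hrt)]
    refine (ih.add_step (F := fun x c => f x c t) (hdiff t _)
      (hasDerivAt_const (0 : ℝ) (u t))).congr_deriv ?_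
    simp [hw2 t hrt, huvar_zero]

theorem stmt18 {n m b : ℕ} (hn : 0 < n) (hm : 0 < m)
    (f : EuclideanSpace ℝ (Fin n) → EuclideanSpace ℝ (Fin m) → ℕ → EuclideanSpace ℝ (Fin n))
    (hf : ∀ t, ContDiff ℝ 1 fun p : EuclideanSpace ℝ (Fin n) × EuclideanSpace ℝ (Fin m) =>
      f p.1 p.2 t)
    (u : ℕ → EuclideanSpace ℝ (Fin m)) (q₀ : EuclideanSpace ℝ (Fin n))
    (r : ℕ) (hr : r < b) (y : EuclideanSpace ℝ (Fin m))
    -- the perturbed control u_α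
    (uvar : ℝ → ℕ → EuclideanSpace ℝ (Fin m))
    (huvar : ∀ α t, uvar α t = if t = r then u r + α • (y - u r) else u t)
    -- the variation vector w
    (w : ℕ → EuclideanSpace ℝ (Fin n))
    (hw1 : w (r + 1) = fderiv ℝ (fun v => f (traj18 f u q₀ r) v r) (u r) (y - u r))
    (hw2 : ∀ t, r + 1 ≤ t →
      w (t + 1) = w t + fderiv ℝ (fun x => f x (u t) t) (traj18 f u q₀ t) (w t)) :
    ∀ t, r + 1 ≤ t → t ≤ b →
      HasDerivAt (fun α : ℝ => traj18 f (uvar α) q₀ t) (w t) 0 :=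
  stmt18_general f hf u q₀ r y uvar huvar w hw1 hw2
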